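/- arXiv:1109.0654 — 11 statements merged into one kernel-verified Lean document; each statement's English description precedes it below -/
import Mathlib

section
/- Let X, H be real Hilbert spaces, K : X → H Fréchet differentiable, C ⊆ X convex, g† ∈ H, η > 0, and u_η a minimizer over C of J_η(u) = ½‖K(u)−g†‖² + (η/2)‖u‖². Define E(u,ũ) = K(u) − K(ũ) − K'(ũ)(u−ũ) and let μ_η = u_η + η⁻¹ K'(u_η)*(K(u_η) − g†). Then for every u ∈ C: ½‖K(u_η) − K(u)‖² + (η/2)‖u_η − u‖² + ⟨K(u_η) − g†, E(u,u_η)⟩ + η⟨μ_η, u − u_η⟩ ≥ 0. -/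
open scoped RealInnerProductSpace

/-- Second-order necessary optimality condition (Lemma 2.1). -/
theorem second_order_necessary
    {X H : Type*} [NormedAddCommGroup X] [InnerProductSpace ℝ X] [CompleteSpace X]
    [NormedAddCommGroup H] [InnerProductSpace ℝ H] [CompleteSpace H]
    (K : X → H) (DK : X → X →L[ℝ] H) (hK : ∀ x, HasFDerivAt K (DK x) x)
    (C : Set X) (hCconv : Convex ℝ C)
    (gdag : H) (η : ℝ) (hη : 0 < η)
    (uη : X) (huη : uη ∈ C)
    (hmin : ∀ u ∈ C, (1/2) * ‖K uη - gdag‖^2 + (η/2) * ‖uη‖^2 ≤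
      (1/2) * ‖K u - gdag‖^2 + (η/2) * ‖u‖^2)
    (E : X → X → H) (hE : ∀ u v, E u v = K u - K v - DK v (u - v))
    (μη : X) (hμη : μη = uη + η⁻¹ • (DK uη).adjoint (K uη - gdag)) :
    ∀ u ∈ C,
      0 ≤ (1/2) * ‖K uη - K u‖^2 + (η/2) * ‖uη - u‖^2
        + ⟪K uη - gdag, E u uη⟫ + η * ⟪μη, u - uη⟫ := by
  intro u hu
  have hm := hmin u hu
  set a := K uη - gdag with ha
  set b := K u - gdag with hb
  have hab : K uη - K u = a - b := by rw [ha, hb]; abel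
  have hadj : ⟪(DK uη).adjoint a, u - uη⟫ = ⟪a, DK uη (u - uη)⟫ :=
    ContinuousLinearMap.adjoint_inner_left _ _ _
  have hηinv : η * η⁻¹ = 1 := mul_inv_cancel₀ hη.ne'
  have hμ : η * ⟪μη, u - uη⟫ = η * ⟪uη, u - uη⟫ + ⟪a, DK uη (u - uη)⟫ := by
    rw [hμη, inner_add_left, real_inner_smul_left, hadj]
    ring_nf
    rw [hηinv]
    ring
  have hEe : ⟪a, E u uη⟫ = ⟪a, b⟫ - ‖a‖^2 - ⟪a, DK uη (u - uη)⟫ := by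
    rw [hE]
    have : K u - K uη - DK uη (u - uη) = (b - a) - DK uη (u - uη) := by
      rw [ha, hb]; abel
    rw [this, inner_sub_right, inner_sub_right, real_inner_self_eq_norm_sq]
  have h1 : ‖a - b‖^2 = ‖a‖^2 - 2*⟪a,b⟫ + ‖b‖^2 := norm_sub_sq_real a b
  have h2 : ‖uη - u‖^2 = ‖uη‖^2 - 2*⟪uη,u⟫ + ‖u‖^2 := norm_sub_sq_real uη u
  have h3 : ⟪uη, u - uη⟫ = ⟪uη, u⟫ - ‖uη‖^2 := by
    rw [inner_sub_right, real_inner_self_eq_norm_sq]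
  rw [hab, hμ, hEe, h1, h2, h3]
  nlinarith [hm]
end

section
/- Suppose K : X → H has Fréchet derivative K'(u) that is Lipschitz continuous with constant L on X, and u†, w, μ† satisfy the source condition K'(u†)* w = u† − μ† with ⟨μ†, u − u†⟩ ≥ 0 for all u ∈ C, and L‖w‖ < 1. Then the nonlinearity condition holds with ε = 1 − L‖w‖ and c_r = 0: for all u ∈ C, ½‖u − u†‖² − ⟨w, E(u,u†)⟩ + ⟨μ†, u − u†⟩ ≥ ((1 − L‖w‖)/2)‖u − u†‖². -/
open scoped RealInnerProductSpace

/-!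
Along the segment `t ↦ v + t • (u - v)` the derivative of the Taylor remainder has norm at most
`L t ‖u - v‖²`, which integrates to `‖E(u, v)‖ ≤ (L / 2) ‖u - v‖²`. Cauchy–Schwarz then gives
`⟪w, E(u, u†)⟫ ≤ (L ‖w‖ / 2) ‖u - u†‖²`, and the multiplier term is nonnegative on `C`.
-/

section TaylorRemainder

variable {X H : Type*} [NormedAddCommGroup X] [NormedSpace ℝ X]
  [NormedAddCommGroup H] [NormedSpace ℝ H]

theorem norm_image_sub_sub_fderiv_le_of_lipschitz
    {K : X → H} {DK : X → X →L[ℝ] H} (hK : ∀ x, HasFDerivAt K (DK x) x)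
    {L : ℝ} {v : X} (hLip : ∀ x, ‖DK x - DK v‖ ≤ L * ‖x - v‖) (u : X) :
    ‖K u - K v - DK v (u - v)‖ ≤ L / 2 * ‖u - v‖ ^ 2 := by
  set d := u - v
  let f : ℝ → H := fun t => K (v + t • d) - K v - t • DK v d
  let B : ℝ → ℝ := fun t => L * ‖d‖ ^ 2 * (t ^ 2 / 2)
  have hf (t : ℝ) : HasDerivAt f (DK (v + t • d) d - DK v d) t := by
    have hline : HasDerivAt (fun t : ℝ => v + t • d) d t := by
      simpa using ((hasDerivAt_id t).smul_const d).const_add v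
    have hlin : HasDerivAt (fun t : ℝ => t • DK v d) (DK v d) t := by
      simpa using (hasDerivAt_id t).smul_const (DK v d)
    exact (((hK _).comp_hasDerivAt t hline).sub_const (K v)).sub hlin
  have hB (t : ℝ) : HasDerivAt B (L * ‖d‖ ^ 2 * t) t := by
    have h : HasDerivAt (fun t : ℝ => t ^ 2 / 2) t t := by
      simpa using (hasDerivAt_pow 2 t).div_const 2
    exact h.const_mul _
  have hf'_le : ∀ t ∈ Set.Ico (0 : ℝ) 1, ‖DK (v + t • d) d - DK v d‖ ≤ L * ‖d‖ ^ 2 * t := by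
    intro t ht
    have hDK : ‖DK (v + t • d) - DK v‖ ≤ L * (t * ‖d‖) := by
      simpa [norm_smul, abs_of_nonneg ht.1] using hLip (v + t • d)
    calc ‖DK (v + t • d) d - DK v d‖ = ‖(DK (v + t • d) - DK v) d‖ := rfl
      _ ≤ ‖DK (v + t • d) - DK v‖ * ‖d‖ := ContinuousLinearMap.le_opNorm _ _
      _ ≤ L * (t * ‖d‖) * ‖d‖ := by gcongr
      _ = L * ‖d‖ ^ 2 * t := by ring
  have hf1 : ‖f 1‖ ≤ B 1 :=
    image_norm_le_of_norm_deriv_right_le_deriv_boundary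
      (fun t _ => (hf t).continuousAt.continuousWithinAt)
      (fun t _ => (hf t).hasDerivWithinAt) (by simp [f, B]) hB hf'_le
      (Set.right_mem_Icc.mpr zero_le_one)
  calc ‖K u - K v - DK v (u - v)‖ = ‖f 1‖ := by simp [f, d]
    _ ≤ B 1 := hf1
    _ = L / 2 * ‖u - v‖ ^ 2 := by ring

end TaylorRemainder

theorem classical_implies_new_nonlinearity_general
    {X H : Type*} [NormedAddCommGroup X] [InnerProductSpace ℝ X]
    [NormedAddCommGroup H] [InnerProductSpace ℝ H]
    (K : X → H) (DK : X → X →L[ℝ] H) (hK : ∀ x, HasFDerivAt K (DK x) x)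
    (L : ℝ) (hLip : ∀ u v : X, ‖DK u - DK v‖ ≤ L * ‖u - v‖)
    (C : Set X)
    (udag : X) (w : H) (μdag : X)
    (hμ : ∀ u ∈ C, 0 ≤ ⟪μdag, u - udag⟫)
    (E : X → X → H) (hE : ∀ u v, E u v = K u - K v - DK v (u - v)) :
    ∀ u ∈ C,
      ((1 - L * ‖w‖) / 2) * ‖u - udag‖^2 ≤
        (1/2) * ‖u - udag‖^2 - ⟪w, E u udag⟫ + ⟪μdag, u - udag⟫ := by
  intro u hu
  have hE_le : ‖E u udag‖ ≤ L / 2 * ‖u - udag‖ ^ 2 := by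
    rw [hE]
    exact norm_image_sub_sub_fderiv_le_of_lipschitz hK (fun x => hLip x udag) u
  have hinner : ⟪w, E u udag⟫ ≤ ‖w‖ * (L / 2 * ‖u - udag‖ ^ 2) :=
    (real_inner_le_norm w _).trans (by gcongr)
  linarith [hμ u hu]

/-- The classical nonlinearity condition (Lipschitz derivative with `L‖w‖ < 1`)
implies the proposed nonlinearity condition with `ε = 1 - L‖w‖`, `c_r = 0`. -/
theorem classical_implies_new_nonlinearity
    {X H : Type*} [NormedAddCommGroup X] [InnerProductSpace ℝ X] [CompleteSpace X]
    [NormedAddCommGroup H] [InnerProductSpace ℝ H] [CompleteSpace H]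
    (K : X → H) (DK : X → X →L[ℝ] H) (hK : ∀ x, HasFDerivAt K (DK x) x)
    (L : ℝ) (hLip : ∀ u v : X, ‖DK u - DK v‖ ≤ L * ‖u - v‖)
    (C : Set X) (hCconv : Convex ℝ C)
    (udag : X) (hudag : udag ∈ C) (w : H) (μdag : X)
    (hsrc : (DK udag).adjoint w = udag - μdag)
    (hμ : ∀ u ∈ C, 0 ≤ ⟪μdag, u - udag⟫)
    (hsmall : L * ‖w‖ < 1)
    (E : X → X → H) (hE : ∀ u v, E u v = K u - K v - DK v (u - v)) :
    ∀ u ∈ C,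
      ((1 - L * ‖w‖) / 2) * ‖u - udag‖^2 ≤
        (1/2) * ‖u - udag‖^2 - ⟪w, E u udag⟫ + ⟪μdag, u - udag⟫ :=
  classical_implies_new_nonlinearity_general K DK hK L hLip C udag w μdag hμ E hE
end

section
/- If the operator K satisfies ‖E(u,ũ)‖ ≤ c_E ‖K(u) − K(ũ)‖ ‖u − ũ‖ for all u, ũ, and the source condition K'(u†)*w = u† − μ† with ⟨μ†, u − u†⟩ ≥ 0 on C holds, then for any c_r > (c_E ‖w‖)², there exists ε > 0 such that for all u ∈ C: (c_r/2)‖K(u) − K(u†)‖² + ½‖u − u†‖² − ⟨w, E(u,u†)⟩ + ⟨μ†, u − u†⟩ ≥ (ε/2)‖u − u†‖². -/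
open scoped RealInnerProductSpace

/-- The nonlinearity condition `‖E(u,ũ)‖ ≤ c_E‖K(u)-K(ũ)‖‖u-ũ‖` together with the
source condition implies the proposed nonlinearity condition for any `c_r > (c_E‖w‖)²`. -/
theorem norm_estimate_implies_nonlinearity
    {X H : Type*} [NormedAddCommGroup X] [InnerProductSpace ℝ X] [CompleteSpace X]
    [NormedAddCommGroup H] [InnerProductSpace ℝ H] [CompleteSpace H]
    (K : X → H) (DK : X → X →L[ℝ] H) (hK : ∀ x, HasFDerivAt K (DK x) x)
    (E : X → X → H) (hE : ∀ u v, E u v = K u - K v - DK v (u - v))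
    (cE : ℝ) (hcE : 0 < cE)
    (hEbound : ∀ u v : X, ‖E u v‖ ≤ cE * ‖K u - K v‖ * ‖u - v‖)
    (C : Set X) (hCconv : Convex ℝ C)
    (udag : X) (hudag : udag ∈ C) (w : H) (μdag : X)
    (hsrc : (DK udag).adjoint w = udag - μdag)
    (hμ : ∀ u ∈ C, 0 ≤ ⟪μdag, u - udag⟫) :
    ∀ cr : ℝ, (cE * ‖w‖)^2 < cr →
      ∃ ε > 0, ∀ u ∈ C,
        (ε/2) * ‖u - udag‖^2 ≤
          (cr/2) * ‖K u - K udag‖^2 + (1/2) * ‖u - udag‖^2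
            - ⟪w, E u udag⟫ + ⟪μdag, u - udag⟫ := by
  intro cr hcr
  have hcr0 : 0 < cr := lt_of_le_of_lt (sq_nonneg _) hcr
  refine ⟨1 - (cE * ‖w‖)^2 / cr, by
    have := div_lt_one hcr0 |>.mpr hcr
    linarith, ?_⟩
  intro u hu
  have hμu := hμ u hu
  have h1 : ⟪w, E u udag⟫ ≤ ‖w‖ * (cE * ‖K u - K udag‖ * ‖u - udag‖) := by
    calc ⟪w, E u udag⟫ ≤ ‖w‖ * ‖E u udag‖ := real_inner_le_norm _ _
      _ ≤ ‖w‖ * (cE * ‖K u - K udag‖ * ‖u - udag‖) := by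
          exact mul_le_mul_of_nonneg_left (hEbound u udag) (norm_nonneg w)
  have hx : (0:ℝ) ≤ ‖u - udag‖ := norm_nonneg _
  have hh : (0:ℝ) ≤ ‖K u - K udag‖ := norm_nonneg _
  have hw : (0:ℝ) ≤ ‖w‖ := norm_nonneg _
  have hyoung : ‖w‖ * (cE * ‖K u - K udag‖ * ‖u - udag‖) ≤
      (cr/2) * ‖K u - K udag‖^2 + ((cE*‖w‖)^2/(2*cr)) * ‖u - udag‖^2 := by
    rw [div_mul_eq_mul_div, div_mul_eq_mul_div,
      div_add_div _ _ (two_ne_zero) (by positivity),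
      le_div_iff₀ (by positivity)]
    nlinarith [sq_nonneg (cr * ‖K u - K udag‖ - cE * ‖w‖ * ‖u - udag‖), sq_nonneg (‖K u - K udag‖ * ‖u - udag‖), mul_nonneg hh hx]
  have hfinal : (1 - (cE * ‖w‖)^2 / cr)/2 * ‖u - udag‖^2 =
      (1/2) * ‖u - udag‖^2 - ((cE*‖w‖)^2/(2*cr)) * ‖u - udag‖^2 := by
    field_simp
  rw [hfinal]
  linarith
end

section
/- Assume the source condition K'(u†)*w = u† − μ† with ⟨μ†, u − u†⟩ ≥ 0 for all u ∈ C, and the nonlinearity condition: (c_r/2)‖K(u)−K(u†)‖² + ½‖u−u†‖² − ⟨w,E(u,u†)⟩ + ⟨μ†,u−u†⟩ ≥ (ε/2)‖u−u†‖² for all u ∈ C, with ε > 0, c_r ≥ 0. Let η > 0 with c_r η < 1, and let u_η minimize J_η(u) = ½‖K(u)−g†‖² + (η/2)‖u‖² over C, where g† = K(u†). Then ‖K(u_η) − g†‖ ≤ 2η‖w‖/(1 − c_r η) and ‖u_η − u†‖ ≤ ε^{−1/2}‖w‖ √η/√(1 − c_r η). -/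
open scoped RealInnerProductSpace

/-- Approximation error estimates (first part of Lemma 2.3):
`‖K(u_η)-g†‖ ≤ 2η‖w‖/(1-c_rη)` and `‖u_η-u†‖ ≤ ε^{-1/2}‖w‖√η/√(1-c_rη)`. -/
theorem approximation_error_estimate
    {X H : Type*} [NormedAddCommGroup X] [InnerProductSpace ℝ X] [CompleteSpace X]
    [NormedAddCommGroup H] [InnerProductSpace ℝ H] [CompleteSpace H]
    (K : X → H) (DK : X → X →L[ℝ] H) (hK : ∀ x, HasFDerivAt K (DK x) x)
    (E : X → X → H) (hE : ∀ u v, E u v = K u - K v - DK v (u - v))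
    (C : Set X) (hCcl : IsClosed C) (hCconv : Convex ℝ C)
    (udag : X) (hudag : udag ∈ C) (w : H) (μdag : X)
    (hsrc : (DK udag).adjoint w = udag - μdag)
    (hμ : ∀ u ∈ C, 0 ≤ ⟪μdag, u - udag⟫)
    (ε cr : ℝ) (hε : 0 < ε) (hcr : 0 ≤ cr)
    (hnon : ∀ u ∈ C,
      (ε/2) * ‖u - udag‖^2 ≤
        (cr/2) * ‖K u - K udag‖^2 + (1/2) * ‖u - udag‖^2
          - ⟪w, E u udag⟫ + ⟪μdag, u - udag⟫)
    (gdag : H) (hg : gdag = K udag)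
    (η : ℝ) (hη : 0 < η) (hcrη : cr * η < 1)
    (uη : X) (huη : uη ∈ C)
    (hmin : ∀ u ∈ C, (1/2) * ‖K uη - gdag‖^2 + (η/2) * ‖uη‖^2 ≤
      (1/2) * ‖K u - gdag‖^2 + (η/2) * ‖u‖^2) :
    ‖K uη - gdag‖ ≤ 2 * η * ‖w‖ / (1 - cr * η) ∧
      ‖uη - udag‖ ≤ ε⁻¹ ^ ((1:ℝ)/2) * ‖w‖ * Real.sqrt η / Real.sqrt (1 - cr * η) := by
  set r : H := K uη - gdag with hr_def
  set d : X := uη - udag with hd_def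
  have ha : 0 < 1 - cr * η := by linarith
  -- minimality at udag
  have h1 : (1/2) * ‖r‖^2 + (η/2) * ‖uη‖^2 ≤ (η/2) * ‖udag‖^2 := by
    have := hmin udag hudag
    rw [hg, sub_self, norm_zero] at this
    simpa using this
  -- norm expansion
  have h2 : ‖uη‖^2 = ‖udag‖^2 + 2 * ⟪udag, d⟫ + ‖d‖^2 := by
    have huu : uη = udag + d := by rw [hd_def]; abel
    rw [huu, norm_add_sq_real]
  -- source condition rewriting
  have h3 : ⟪udag, d⟫ = ⟪w, r⟫ - ⟪w, E uη udag⟫ + ⟪μdag, d⟫ := by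
    have hud : udag = (DK udag).adjoint w + μdag := by rw [hsrc]; abel
    have hDKd : (DK udag) d = r - E uη udag := by
      rw [hE uη udag, hr_def, hg, hd_def]; abel
    calc ⟪udag, d⟫ = ⟪(DK udag).adjoint w, d⟫ + ⟪μdag, d⟫ := by
          nth_rewrite 1 [hud]
          rw [inner_add_left]
      _ = ⟪w, (DK udag) d⟫ + ⟪μdag, d⟫ := by
          rw [ContinuousLinearMap.adjoint_inner_left]
      _ = ⟪w, r⟫ - ⟪w, E uη udag⟫ + ⟪μdag, d⟫ := by
          rw [hDKd, inner_sub_right]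
  -- nonlinearity condition at uη
  have h4 : (ε/2) * ‖d‖^2 ≤ (cr/2) * ‖r‖^2 + (1/2) * ‖d‖^2
      - ⟪w, E uη udag⟫ + ⟪μdag, d⟫ := by
    have := hnon uη huη
    rw [← hg] at this
    simpa [hd_def, hr_def] using this
  -- lower bound for the inner product term
  have hA : ⟪w, r⟫ + (ε/2) * ‖d‖^2 - (cr/2) * ‖r‖^2 - (1/2) * ‖d‖^2 ≤ ⟪udag, d⟫ := by
    rw [h3]; linarith
  have hwr : -(‖w‖ * ‖r‖) ≤ ⟪w, r⟫ := by
    have := abs_real_inner_le_norm w r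
    have := neg_abs_le (⟪w, r⟫)
    linarith
  -- key inequality
  have key : (1 - cr * η)/2 * ‖r‖^2 + ε * η / 2 * ‖d‖^2 ≤ η * (‖w‖ * ‖r‖) := by
    have hAη := mul_le_mul_of_nonneg_left hA hη.le
    have hwrη := mul_le_mul_of_nonneg_left hwr hη.le
    nlinarith [h1, h2, hAη, hwrη]
  have hd2 : 0 ≤ ε * η / 2 * ‖d‖^2 := by positivity
  constructor
  · -- first estimate
    rw [le_div_iff₀ ha]
    rcases eq_or_lt_of_le (norm_nonneg r) with hr0 | hr0
    · have h0 : (0:ℝ) ≤ 2 * η * ‖w‖ := by positivity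
      rw [← hr0]
      simpa using h0
    · nlinarith [key, hd2, mul_pos hr0 ha]
  · -- second estimate
    have ha' : 0 ≤ 1 - cr * η := ha.le
    set R : ℝ := ε⁻¹ ^ ((1:ℝ)/2) * ‖w‖ * Real.sqrt η / Real.sqrt (1 - cr * η) with hR_def
    have hεinv : (0:ℝ) ≤ ε⁻¹ := by positivity
    have hRsq : R^2 = ε⁻¹ * ‖w‖^2 * η / (1 - cr * η) := by
      rw [hR_def, div_pow, mul_pow, mul_pow, Real.sq_sqrt hη.le, Real.sq_sqrt ha',
        ← Real.rpow_natCast (ε⁻¹ ^ ((1:ℝ)/2)) 2, ← Real.rpow_mul hεinv]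
      norm_num
    have hR0 : 0 ≤ R := by
      rw [hR_def]
      positivity
    have hεη : 0 < ε * η := mul_pos hε hη
    have step : ε * η * (‖d‖^2 * (1 - cr * η)) ≤ η * (η * ‖w‖^2) := by
      have k2 := mul_le_mul_of_nonneg_right key ha.le
      have sq := sq_nonneg ((1 - cr * η) * ‖r‖ - η * ‖w‖)
      linarith [k2, sq]
    have hd2R : ‖d‖^2 ≤ R^2 := by
      rw [hRsq, le_div_iff₀ ha]
      calc ‖d‖^2 * (1 - cr * η)
          = (ε * η * (‖d‖^2 * (1 - cr * η))) / (ε * η) := by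
            field_simp
        _ ≤ (η * (η * ‖w‖^2)) / (ε * η) := by gcongr
        _ = ε⁻¹ * ‖w‖^2 * η := by field_simp
    calc ‖d‖ = Real.sqrt (‖d‖^2) := (Real.sqrt_sq (norm_nonneg d)).symm
      _ ≤ Real.sqrt (R^2) := Real.sqrt_le_sqrt hd2R
      _ = R := Real.sqrt_sq hR0
end

section
/- Assume the second-order sufficient condition: there are c_s ∈ (0,1], ε' > 0 such that for all u ∈ C, ½‖K(u_η)−K(u)‖² + (η/2)‖u_η−u‖² + ⟨K(u_η)−g†, E(u,u_η)⟩ + η⟨μ_η, u−u_η⟩ ≥ (c_s/2)‖K(u_η)−K(u)‖² + (ε'η/2)‖u−u_η‖². Let u_η^δ minimize J_η with data g^δ where ‖g^δ − g†‖ ≤ δ, and u_η minimize J_η with data g†. Then ‖K(u_η^δ) − K(u_η)‖ ≤ 2δ/c_s and ‖u_η^δ − u_η‖ ≤ δ/√(ε' c_s η). -/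
open scoped RealInnerProductSpace

set_option maxHeartbeats 2000000 in
/-- Propagation error estimates (second part of Lemma 2.3) under the
second-order sufficient optimality condition:
`‖K(u_η^δ)-K(u_η)‖ ≤ 2δ/c_s` and `‖u_η^δ-u_η‖ ≤ δ/√(ε' c_s η)`. -/
theorem propagation_error_estimate
    {X H : Type*} [NormedAddCommGroup X] [InnerProductSpace ℝ X] [CompleteSpace X]
    [NormedAddCommGroup H] [InnerProductSpace ℝ H] [CompleteSpace H]
    (K : X → H) (DK : X → X →L[ℝ] H) (hK : ∀ x, HasFDerivAt K (DK x) x)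
    (E : X → X → H) (hE : ∀ u v, E u v = K u - K v - DK v (u - v))
    (C : Set X) (hCcl : IsClosed C) (hCconv : Convex ℝ C)
    (gdag gδ : H) (δ : ℝ) (hδ : ‖gδ - gdag‖ ≤ δ)
    (η : ℝ) (hη : 0 < η)
    (uη uηδ : X) (huη : uη ∈ C) (huηδ : uηδ ∈ C)
    (hmin : ∀ u ∈ C, (1/2) * ‖K uη - gdag‖^2 + (η/2) * ‖uη‖^2 ≤
      (1/2) * ‖K u - gdag‖^2 + (η/2) * ‖u‖^2)
    (hminδ : ∀ u ∈ C, (1/2) * ‖K uηδ - gδ‖^2 + (η/2) * ‖uηδ‖^2 ≤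
      (1/2) * ‖K u - gδ‖^2 + (η/2) * ‖u‖^2)
    (μη : X)
    (hfoc : (DK uη).adjoint (K uη - gdag) + η • uη - η • μη = 0)
    (hμη : ∀ u ∈ C, 0 ≤ ⟪μη, u - uη⟫)
    (cs ε' : ℝ) (hcs : 0 < cs) (hcs1 : cs ≤ 1) (hε' : 0 < ε')
    (hsos : ∀ u ∈ C,
      (cs/2) * ‖K uη - K u‖^2 + (ε' * η/2) * ‖u - uη‖^2 ≤
        (1/2) * ‖K uη - K u‖^2 + (η/2) * ‖uη - u‖^2
          + ⟪K uη - gdag, E u uη⟫ + η * ⟪μη, u - uη⟫) :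
    ‖K uηδ - K uη‖ ≤ 2 * δ / cs ∧
      ‖uηδ - uη‖ ≤ δ / Real.sqrt (ε' * cs * η) := by
  have hδ0 : 0 ≤ δ := le_trans (norm_nonneg _) hδ
  set t := ‖K uηδ - K uη‖ with ht
  set s := ‖uηδ - uη‖ with hs
  clear_value t s
  have ht0 : 0 ≤ t := ht ▸ norm_nonneg _
  have hs0 : 0 ≤ s := hs ▸ norm_nonneg _
  -- Step A: J(uηδ) ≤ J(uη) + δ * t  (with data g†)
  have hA : (1/2) * ‖K uηδ - gdag‖^2 + (η/2) * ‖uηδ‖^2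
      ≤ (1/2) * ‖K uη - gdag‖^2 + (η/2) * ‖uη‖^2 + δ * t := by
    have h1 := hminδ uη huη
    have e1 : ‖K uηδ - gδ‖^2
        = ‖K uηδ - gdag‖^2 - 2*⟪K uηδ - gdag, gδ - gdag⟫ + ‖gδ - gdag‖^2 := by
      have h : K uηδ - gδ = (K uηδ - gdag) - (gδ - gdag) := by abel
      rw [h, norm_sub_sq_real]
    have e2 : ‖K uη - gδ‖^2
        = ‖K uη - gdag‖^2 - 2*⟪K uη - gdag, gδ - gdag⟫ + ‖gδ - gdag‖^2 := by
      have h : K uη - gδ = (K uη - gdag) - (gδ - gdag) := by abel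
      rw [h, norm_sub_sq_real]
    have e3 : ⟪K uηδ - gdag, gδ - gdag⟫ - ⟪K uη - gdag, gδ - gdag⟫
        = ⟪K uηδ - K uη, gδ - gdag⟫ := by
      rw [← inner_sub_left]; congr 1; abel
    have e4 : ⟪K uηδ - K uη, gδ - gdag⟫ ≤ t * δ := by
      calc ⟪K uηδ - K uη, gδ - gdag⟫ ≤ ‖K uηδ - K uη‖ * ‖gδ - gdag‖ :=
            real_inner_le_norm _ _
        _ ≤ ‖K uηδ - K uη‖ * δ := mul_le_mul_of_nonneg_left hδ (norm_nonneg _)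
        _ = t * δ := by rw [ht]
    rw [e1, e2] at h1
    nlinarith [e3, e4]
  -- first-order condition rearranged
  have hadj : (DK uη).adjoint (K uη - gdag) = η • μη - η • uη := by
    have h : (DK uη).adjoint (K uη - gdag) - (η • μη - η • uη) = 0 := by
      rw [← hfoc]; abel
    exact sub_eq_zero.mp h
  -- Step B: exact expansion of J(uηδ) - J(uη)
  have hB : (1/2) * ‖K uηδ - gdag‖^2 + (η/2) * ‖uηδ‖^2
      - ((1/2) * ‖K uη - gdag‖^2 + (η/2) * ‖uη‖^2)
      = (1/2) * ‖K uη - K uηδ‖^2 + (η/2) * ‖uη - uηδ‖^2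
        + ⟪K uη - gdag, E uηδ uη⟫ + η * ⟪μη, uηδ - uη⟫ := by
    have eH : ‖K uηδ - gdag‖^2
        = ‖K uη - gdag‖^2 + 2*⟪K uη - gdag, K uηδ - K uη⟫ + ‖K uηδ - K uη‖^2 := by
      have h : K uηδ - gdag = (K uη - gdag) + (K uηδ - K uη) := by abel
      rw [h, norm_add_sq_real]
    have eX : ‖uηδ‖^2 = ‖uη‖^2 + 2*⟪uη, uηδ - uη⟫ + ‖uηδ - uη‖^2 := by
      have h : uηδ = uη + (uηδ - uη) := by abel
      nth_rewrite 1 [h]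
      rw [norm_add_sq_real]
    have eE : ⟪K uη - gdag, K uηδ - K uη⟫
        = ⟪K uη - gdag, E uηδ uη⟫ + ⟪K uη - gdag, DK uη (uηδ - uη)⟫ := by
      rw [← inner_add_right]; congr 1; rw [hE]; abel
    have eAdj : ⟪K uη - gdag, DK uη (uηδ - uη)⟫
        = η * ⟪μη, uηδ - uη⟫ - η * ⟪uη, uηδ - uη⟫ := by
      rw [← ContinuousLinearMap.adjoint_inner_left, hadj, inner_sub_left,
        real_inner_smul_left, real_inner_smul_left]
    have eRev1 : ‖K uη - K uηδ‖ = ‖K uηδ - K uη‖ := norm_sub_rev _ _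
    have eRev2 : ‖uη - uηδ‖ = ‖uηδ - uη‖ := norm_sub_rev _ _
    rw [eH, eX, eE, eAdj, eRev1, eRev2]; ring
  -- Combine: key inequality
  have hkey : (cs/2) * t^2 + (ε' * η/2) * s^2 ≤ δ * t := by
    have h1 := hsos uηδ huηδ
    have eRev : ‖K uη - K uηδ‖ = t := by rw [ht]; exact norm_sub_rev _ _
    rw [eRev] at h1
    have h2 : (1/2) * ‖K uη - K uηδ‖^2 + (η/2) * ‖uη - uηδ‖^2
          + ⟪K uη - gdag, E uηδ uη⟫ + η * ⟪μη, uηδ - uη⟫ ≤ δ * t := by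
      rw [← hB]; linarith [hA]
    rw [eRev] at h2
    rw [← hs] at h1
    linarith
  have hεcsη : 0 < ε' * cs * η := by positivity
  constructor
  · rcases eq_or_lt_of_le ht0 with h0 | h0
    · rw [← h0]; positivity
    · have hnn : 0 ≤ ε' * η/2 * s^2 := by positivity
      have h1 : (cs/2) * t^2 ≤ δ * t := by linarith
      rw [le_div_iff₀ hcs]
      nlinarith [h1, h0]
  · have h2 : s^2 ≤ δ^2 / (ε' * cs * η) := by
      rw [le_div_iff₀ hεcsη]
      have hc : cs * ((cs/2) * t^2 + (ε' * η/2) * s^2) ≤ cs * (δ * t) :=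
        mul_le_mul_of_nonneg_left hkey hcs.le
      nlinarith [sq_nonneg (cs * t - δ)]
    calc s = Real.sqrt (s^2) := (Real.sqrt_sq hs0).symm
      _ ≤ Real.sqrt (δ^2 / (ε' * cs * η)) := Real.sqrt_le_sqrt h2
      _ = δ / Real.sqrt (ε' * cs * η) := by
          rw [Real.sqrt_div (sq_nonneg δ), Real.sqrt_sq hδ0]
end

section
/- Under the source condition K'(u†)*w = u† − μ† (⟨μ†,u−u†⟩ ≥ 0 on C) and the nonlinearity condition ((c_r/2)‖K(u)−K(u†)‖² + ½‖u−u†‖² − ⟨w,E(u,u†)⟩ + ⟨μ†,u−u†⟩ ≥ (ε/2)‖u−u†‖² on C), if ‖g^δ − g†‖ ≤ δ with g† = K(u†), 2c_r η < 1, and u_η^δ minimizes ½‖K(u)−g^δ‖² + (η/2)‖u‖² over C, then ‖u_η^δ − u†‖ ≤ ε^{−1/2}( √(1+2c_r η) δ/√η + √η ‖w‖/√(1−2c_r η) + √(2‖w‖δ) ). -/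
open scoped RealInnerProductSpace


private lemma hstep_aux (R S D U V T I P Q W d e c n : ℝ)
    (f1 : 1/2*R^2 + n/2*U ≤ 1/2*d^2 + n/2*V)
    (f2 : U = D^2 + 2*T + V)
    (f3 : T = I - P + Q)
    (f4 : e/2*D^2 ≤ c/2*S^2 + 1/2*D^2 - P + Q)
    (f5 : S ≤ R + d)
    (f6 : -(W*S) ≤ I)
    (hS0 : 0 ≤ S) (hW : 0 ≤ W) (hn : 0 < n) (hc : 0 ≤ c) :
    (1-2*c*n)/2*R^2 - n*W*R + n*e/2*D^2 ≤ (1+2*c*n)*d^2/2 + n*W*d := by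
  have h2 : n*U = n*(D^2 + 2*T + V) := by rw [f2]
  have h3 : n*T = n*(I - P + Q) := by rw [f3]
  have h4 : n*(e/2*D^2) ≤ n*(c/2*S^2 + 1/2*D^2 - P + Q) :=
    mul_le_mul_of_nonneg_left f4 hn.le
  have h5 : n*W*S ≤ n*W*(R+d) := mul_le_mul_of_nonneg_left f5 (by positivity)
  have h6 : n*(-(W*S)) ≤ n*I := mul_le_mul_of_nonneg_left f6 hn.le
  have h1 : c*n/2*(S*S) ≤ c*n/2*((R+d)*(R+d)) :=
    mul_le_mul_of_nonneg_left (mul_self_le_mul_self hS0 f5) (by positivity)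
  have h0 : 0 ≤ c*n*(R-d)^2 := by positivity
  nlinarith [h2, h3, h4, h5, h6, h1, h0, f1]

/-- A priori error estimate (Theorem 3.1, first estimate). -/
theorem apriori_error_estimate
    {X H : Type*} [NormedAddCommGroup X] [InnerProductSpace ℝ X] [CompleteSpace X]
    [NormedAddCommGroup H] [InnerProductSpace ℝ H] [CompleteSpace H]
    (K : X → H) (DK : X → X →L[ℝ] H) (hK : ∀ x, HasFDerivAt K (DK x) x)
    (E : X → X → H) (hE : ∀ u v, E u v = K u - K v - DK v (u - v))
    (C : Set X) (hCcl : IsClosed C) (hCconv : Convex ℝ C)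
    (udag : X) (hudag : udag ∈ C) (w : H) (μdag : X)
    (hsrc : (DK udag).adjoint w = udag - μdag)
    (hμ : ∀ u ∈ C, 0 ≤ ⟪μdag, u - udag⟫)
    (ε cr : ℝ) (hε : 0 < ε) (hcr : 0 ≤ cr)
    (hnon : ∀ u ∈ C,
      (ε/2) * ‖u - udag‖^2 ≤
        (cr/2) * ‖K u - K udag‖^2 + (1/2) * ‖u - udag‖^2
          - ⟪w, E u udag⟫ + ⟪μdag, u - udag⟫)
    (gdag gδ : H) (hg : gdag = K udag)
    (δ : ℝ) (hδ : ‖gδ - gdag‖ ≤ δ)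
    (η : ℝ) (hη : 0 < η) (hcrη : 2 * cr * η < 1)
    (uηδ : X) (huηδ : uηδ ∈ C)
    (hminδ : ∀ u ∈ C, (1/2) * ‖K uηδ - gδ‖^2 + (η/2) * ‖uηδ‖^2 ≤
      (1/2) * ‖K u - gδ‖^2 + (η/2) * ‖u‖^2) :
    ‖uηδ - udag‖ ≤ ε⁻¹ ^ ((1:ℝ)/2) *
      (Real.sqrt (1 + 2 * cr * η) * δ / Real.sqrt η
        + Real.sqrt η * ‖w‖ / Real.sqrt (1 - 2 * cr * η)
        + Real.sqrt (2 * ‖w‖ * δ)) := by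

  have hδ0 : 0 ≤ δ := le_trans (norm_nonneg _) hδ
  have ht : (0:ℝ) < 1 - 2*cr*η := by linarith
  have hcrη0 : (0:ℝ) ≤ 2*cr*η := by positivity
  have hW : (0:ℝ) ≤ ‖w‖ := norm_nonneg w
  have hR0 : (0:ℝ) ≤ ‖K uηδ - gδ‖ := norm_nonneg _
  have hS0 : (0:ℝ) ≤ ‖K uηδ - gdag‖ := norm_nonneg _
  have f1 : (1/2) * ‖K uηδ - gδ‖^2 + (η/2) * ‖uηδ‖^2 ≤ (1/2) * δ^2 + (η/2) * ‖udag‖^2 := by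
    have h := hminδ udag hudag
    rw [← hg] at h
    have h2 : ‖gdag - gδ‖ ≤ δ := by rwa [norm_sub_rev]
    nlinarith [norm_nonneg (gdag - gδ)]
  have f2 : ‖uηδ‖^2 = ‖uηδ - udag‖^2 + 2*⟪udag, uηδ - udag⟫ + ‖udag‖^2 := by
    have h := norm_add_sq_real (uηδ - udag) udag
    rw [sub_add_cancel] at h
    rw [h, real_inner_comm]
  have f3 : ⟪udag, uηδ - udag⟫ = ⟪w, K uηδ - gdag⟫ - ⟪w, E uηδ udag⟫ + ⟪μdag, uηδ - udag⟫ := by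
    have h1 : ⟪(DK udag).adjoint w, uηδ - udag⟫ = ⟪w, DK udag (uηδ - udag)⟫ :=
      ContinuousLinearMap.adjoint_inner_left _ _ _
    have h3 : DK udag (uηδ - udag) = (K uηδ - gdag) - E uηδ udag := by
      rw [hE uηδ udag, hg]; abel
    have h4 : (udag : X) = (DK udag).adjoint w + μdag := by rw [hsrc]; abel
    calc ⟪udag, uηδ - udag⟫
        = ⟪(DK udag).adjoint w, uηδ - udag⟫ + ⟪μdag, uηδ - udag⟫ := by
          rw [← inner_add_left, ← h4]
      _ = ⟪w, (K uηδ - gdag) - E uηδ udag⟫ + ⟪μdag, uηδ - udag⟫ := by rw [h1, h3]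
      _ = _ := by rw [inner_sub_right]
  have f4 : (ε/2) * ‖uηδ - udag‖^2 ≤ (cr/2) * ‖K uηδ - gdag‖^2 + (1/2)*‖uηδ - udag‖^2
      - ⟪w, E uηδ udag⟫ + ⟪μdag, uηδ - udag⟫ := by
    have h := hnon uηδ huηδ
    rwa [← hg] at h
  have f5 : ‖K uηδ - gdag‖ ≤ ‖K uηδ - gδ‖ + δ := by
    calc ‖K uηδ - gdag‖ = ‖(K uηδ - gδ) + (gδ - gdag)‖ := by rw [sub_add_sub_cancel]
      _ ≤ ‖K uηδ - gδ‖ + ‖gδ - gdag‖ := norm_add_le _ _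
      _ ≤ _ := by linarith
  have f6 : -(‖w‖ * ‖K uηδ - gdag‖) ≤ ⟪w, K uηδ - gdag⟫ :=
    neg_le_of_abs_le (abs_real_inner_le_norm _ _)
  have hint1 : cr*η/2*(‖K uηδ - gdag‖*‖K uηδ - gdag‖)
      ≤ cr*η/2*((‖K uηδ - gδ‖ + δ)*(‖K uηδ - gδ‖ + δ)) :=
    mul_le_mul_of_nonneg_left (mul_self_le_mul_self hS0 f5) (by positivity)
  have hint2 : η*‖w‖*‖K uηδ - gdag‖ ≤ η*‖w‖*(‖K uηδ - gδ‖ + δ) :=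
    mul_le_mul_of_nonneg_left f5 (by positivity)
  have hint3 : η*(-(‖w‖ * ‖K uηδ - gdag‖)) ≤ η*⟪w, K uηδ - gdag⟫ :=
    mul_le_mul_of_nonneg_left f6 hη.le
  have hint4 : η*((ε/2) * ‖uηδ - udag‖^2) ≤ η*((cr/2) * ‖K uηδ - gdag‖^2
      + (1/2)*‖uηδ - udag‖^2 - ⟪w, E uηδ udag⟫ + ⟪μdag, uηδ - udag⟫) :=
    mul_le_mul_of_nonneg_left f4 hη.le
  have hstep : ((1-2*cr*η)/2) * ‖K uηδ - gδ‖^2 - η*‖w‖*‖K uηδ - gδ‖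
      + (η*ε/2)*‖uηδ - udag‖^2 ≤ (1+2*cr*η)*δ^2/2 + η*‖w‖*δ := by
    have := hstep_aux ‖K uηδ - gδ‖ ‖K uηδ - gdag‖ ‖uηδ - udag‖ (‖uηδ‖^2) (‖udag‖^2)
      ⟪udag, uηδ - udag⟫ ⟪w, K uηδ - gdag⟫ ⟪w, E uηδ udag⟫ ⟪μdag, uηδ - udag⟫
      ‖w‖ δ ε cr η (by linarith [f1]) f2 f3 (by linarith [f4]) f5 f6 hS0 hW hη hcr
    linarith [this]
  have h7 : η*(1-2*cr*η)*(ε*‖uηδ - udag‖^2) ≤ (1-2*cr*η)*(1+2*cr*η)*δ^2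
      + 2*η*(1-2*cr*η)*‖w‖*δ + η^2*‖w‖^2 := by
    have hm := mul_le_mul_of_nonneg_left hstep (by positivity : (0:ℝ) ≤ 2*(1-2*cr*η))
    linarith [hm, sq_nonneg ((1-2*cr*η)*‖K uηδ - gδ‖ - η*‖w‖)]
  have hkey : ε*‖uηδ - udag‖^2 ≤ (1+2*cr*η)*δ^2/η + η*‖w‖^2/(1-2*cr*η) + 2*‖w‖*δ := by
    rw [div_add_div _ _ (ne_of_gt hη) (ne_of_gt ht), ← sub_le_iff_le_add,
      le_div_iff₀ (by positivity)]
    linarith [h7]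
  set A := Real.sqrt (1 + 2 * cr * η) * δ / Real.sqrt η with hA
  set B := Real.sqrt η * ‖w‖ / Real.sqrt (1 - 2 * cr * η) with hB
  set C' := Real.sqrt (2 * ‖w‖ * δ) with hC'
  have hA0 : 0 ≤ A := by rw [hA]; positivity
  have hB0 : 0 ≤ B := by rw [hB]; positivity
  have hC0 : 0 ≤ C' := Real.sqrt_nonneg _
  have hA2 : A^2 = (1+2*cr*η)*δ^2/η := by
    rw [hA, div_pow, mul_pow, Real.sq_sqrt (by linarith : (0:ℝ) ≤ 1+2*cr*η),
      Real.sq_sqrt hη.le]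
  have hB2 : B^2 = η*‖w‖^2/(1-2*cr*η) := by
    rw [hB, div_pow, mul_pow, Real.sq_sqrt hη.le, Real.sq_sqrt ht.le]
  have hC2 : C'^2 = 2*‖w‖*δ := Real.sq_sqrt (by positivity)
  have h8 : ε * ‖uηδ - udag‖^2 ≤ (A+B+C')^2 := by
    have e1 : ε * ‖uηδ - udag‖^2 ≤ A^2+B^2+C'^2 := by
      rw [hA2, hB2, hC2]; linarith [hkey]
    linarith [e1, mul_nonneg hA0 hB0, mul_nonneg hA0 hC0, mul_nonneg hB0 hC0]
  have h9 : ‖uηδ - udag‖^2 ≤ ε⁻¹ * (A+B+C')^2 := by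
    rw [inv_mul_eq_div, le_div_iff₀ hε]
    linarith [h8]
  have h10 : ‖uηδ - udag‖ ≤ Real.sqrt ε⁻¹ * (A+B+C') := by
    have hs := Real.sqrt_le_sqrt h9
    rwa [Real.sqrt_sq (norm_nonneg _), Real.sqrt_mul (by positivity),
      Real.sqrt_sq (by positivity)] at hs
  rw [← Real.sqrt_eq_rpow]
  exact h10
end

section
/- Under the same source and nonlinearity conditions as in the a priori estimate, with 2c_rη < 1, the residual of the noisy-data minimizer satisfies ‖K(u_η^δ) − g^δ‖ ≤ (1−2c_rη)^{−1/2}( √(1+2c_rη) δ + 2η‖w‖/√(1−2c_rη) + √(2‖w‖ηδ) ). -/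
open scoped RealInnerProductSpace

private lemma aux0 (t δ d η ε cr nw a b n ip iw ie im : ℝ)
    (hη : 0 < η) (hε : 0 < ε) (hn : 0 ≤ n)
    (hA : (1/2) * t^2 + (η/2) * a ≤ (1/2) * δ^2 + (η/2) * b)
    (hB : a = b + 2 * ip + n)
    (hC : ip = iw - ie + im)
    (hD : (ε/2) * n ≤ (cr/2) * d^2 + (1/2) * n - ie + im)
    (hCS : -(nw * d) ≤ iw) :
    (1/2) * t^2 ≤ (1/2) * δ^2 + (η * cr / 2) * d^2 + η * nw * d := by
  have h1 : η * ((ε/2) * n) ≤ η * ((cr/2) * d^2 + (1/2) * n - ie + im) :=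
    mul_le_mul_of_nonneg_left hD hη.le
  have h2 : η * (-(nw * d)) ≤ η * iw := mul_le_mul_of_nonneg_left hCS hη.le
  have h3 : 0 ≤ η * (ε * n) := mul_nonneg hη.le (mul_nonneg hε.le hn)
  nlinarith [h1, h2, h3, hA]

private lemma aux1 (t δ c d cr η : ℝ) (ht0 : 0 ≤ t) (hδ0 : 0 ≤ δ) (hc0 : 0 ≤ c)
    (hcr : 0 ≤ cr) (hη : 0 < η) (hd0 : 0 ≤ d) (hdt : d ≤ t + δ)
    (hcomb : (1/2) * t^2 ≤ (1/2) * δ^2 + (η * cr / 2) * d^2 + c * d) :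
    (1 - 2*cr*η) * t^2 ≤ (1 + 2*cr*η) * δ^2 + 2*c*t + 2*c*δ := by
  have hd2 : d^2 ≤ 2*t^2 + 2*δ^2 := by nlinarith [hdt, hd0, sq_nonneg (t - δ)]
  have henc : 0 ≤ η * cr / 2 := by positivity
  nlinarith [mul_le_mul_of_nonneg_left hd2 henc, mul_le_mul_of_nonneg_left hdt hc0]

private lemma aux2 (s P c t : ℝ) (hs : 0 < s) (hP : 0 ≤ P) (hc : 0 ≤ c) (ht : 0 ≤ t)
    (h2 : (s*s) * t^2 ≤ P^2 + 2*c*t) : (s*s) * t ≤ s * P + 2*c := by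
  have h2m : (s*s) * ((s*s) * t^2) ≤ (s*s) * (P^2 + 2*c*t) :=
    mul_le_mul_of_nonneg_left h2 (by positivity)
  nlinarith [h2m, mul_nonneg (mul_nonneg hs.le hs.le) ht, mul_nonneg hs.le hP,
    mul_nonneg hc (mul_nonneg (mul_nonneg hs.le hs.le) ht), mul_nonneg hc (mul_nonneg hs.le hP)]

set_option maxHeartbeats 1000000 in
/-- A priori residual estimate (Theorem 3.1, second estimate). -/
theorem apriori_residual_estimate
    {X H : Type*} [NormedAddCommGroup X] [InnerProductSpace ℝ X] [CompleteSpace X]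
    [NormedAddCommGroup H] [InnerProductSpace ℝ H] [CompleteSpace H]
    (K : X → H) (DK : X → X →L[ℝ] H) (hK : ∀ x, HasFDerivAt K (DK x) x)
    (E : X → X → H) (hE : ∀ u v, E u v = K u - K v - DK v (u - v))
    (C : Set X) (hCcl : IsClosed C) (hCconv : Convex ℝ C)
    (udag : X) (hudag : udag ∈ C) (w : H) (μdag : X)
    (hsrc : (DK udag).adjoint w = udag - μdag)
    (hμ : ∀ u ∈ C, 0 ≤ ⟪μdag, u - udag⟫)
    (ε cr : ℝ) (hε : 0 < ε) (hcr : 0 ≤ cr)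
    (hnon : ∀ u ∈ C,
      (ε/2) * ‖u - udag‖^2 ≤
        (cr/2) * ‖K u - K udag‖^2 + (1/2) * ‖u - udag‖^2
          - ⟪w, E u udag⟫ + ⟪μdag, u - udag⟫)
    (gdag gδ : H) (hg : gdag = K udag)
    (δ : ℝ) (hδ : ‖gδ - gdag‖ ≤ δ)
    (η : ℝ) (hη : 0 < η) (hcrη : 2 * cr * η < 1)
    (uηδ : X) (huηδ : uηδ ∈ C)
    (hminδ : ∀ u ∈ C, (1/2) * ‖K uηδ - gδ‖^2 + (η/2) * ‖uηδ‖^2 ≤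
      (1/2) * ‖K u - gδ‖^2 + (η/2) * ‖u‖^2) :
    ‖K uηδ - gδ‖ ≤ (1 - 2 * cr * η) ^ (-(1:ℝ)/2) *
      (Real.sqrt (1 + 2 * cr * η) * δ
        + 2 * η * ‖w‖ / Real.sqrt (1 - 2 * cr * η)
        + Real.sqrt (2 * ‖w‖ * η * δ)) := by
  set v : X := uηδ - udag with hv
  set t : ℝ := ‖K uηδ - gδ‖ with ht
  set d : ℝ := ‖K uηδ - K udag‖ with hd
  have ht0 : 0 ≤ t := norm_nonneg _
  have hd0 : 0 ≤ d := norm_nonneg _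
  have hδ0 : 0 ≤ δ := le_trans (norm_nonneg _) hδ
  have hβ : (0:ℝ) < 1 - 2 * cr * η := by linarith
  -- Step A : minimality at udag
  have hA : (1/2) * t^2 + (η/2) * ‖uηδ‖^2 ≤ (1/2) * δ^2 + (η/2) * ‖udag‖^2 := by
    have h1 := hminδ udag hudag
    have h2 : ‖K udag - gδ‖ ≤ δ := by
      rw [← norm_neg]; simpa [hg, neg_sub] using hδ
    have h3 : ‖K udag - gδ‖^2 ≤ δ^2 := pow_le_pow_left₀ (norm_nonneg _) h2 2
    linarith
  -- Step B : norm expansion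
  have hB : ‖uηδ‖^2 = ‖udag‖^2 + 2 * ⟪udag, v⟫ + ‖v‖^2 := by
    have h : udag + v = uηδ := by rw [hv]; abel
    rw [← h, norm_add_sq_real]
  -- Step C : source condition
  have hC : ⟪udag, v⟫ = ⟪w, K uηδ - K udag⟫ - ⟪w, E uηδ udag⟫ + ⟪μdag, v⟫ := by
    have h1 : ⟪udag - μdag, v⟫ = ⟪w, (DK udag) v⟫ := by
      rw [← hsrc, ContinuousLinearMap.adjoint_inner_left]
    have h2 : (DK udag) v = (K uηδ - K udag) - E uηδ udag := by
      rw [hE uηδ udag, hv]; abel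
    have h3 : ⟪udag, v⟫ = ⟪udag - μdag, v⟫ + ⟪μdag, v⟫ := by
      rw [inner_sub_left]; ring
    rw [h3, h1, h2, inner_sub_right]
  -- Step D : nonlinearity
  have hD : (ε/2) * ‖v‖^2 ≤ (cr/2) * d^2 + (1/2) * ‖v‖^2
      - ⟪w, E uηδ udag⟫ + ⟪μdag, v⟫ := hnon uηδ huηδ
  -- Cauchy-Schwarz
  have hCS : -(‖w‖ * d) ≤ ⟪w, K uηδ - K udag⟫ := by
    have h1 := abs_real_inner_le_norm w (K uηδ - K udag)
    have h2 := neg_abs_le ⟪w, K uηδ - K udag⟫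
    rw [hd]; linarith
  -- combined inequality
  have hcomb : (1/2) * t^2 ≤ (1/2) * δ^2 + (η * cr / 2) * d^2 + η * ‖w‖ * d :=
    aux0 t δ d η ε cr ‖w‖ (‖uηδ‖^2) (‖udag‖^2) (‖v‖^2) (⟪udag, v⟫)
      (⟪w, K uηδ - K udag⟫) (⟪w, E uηδ udag⟫) (⟪μdag, v⟫)
      hη hε (sq_nonneg _) hA hB hC hD hCS
  -- d ≤ t + δ
  have hdt : d ≤ t + δ := by
    have h : K uηδ - K udag = (K uηδ - gδ) + (gδ - gdag) := by rw [hg]; abel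
    rw [hd, h]
    refine le_trans (norm_add_le _ _) ?_
    rw [← ht]; linarith
  have hc0 : (0:ℝ) ≤ η * ‖w‖ := mul_nonneg hη.le (norm_nonneg w)
  have h1 : (1 - 2*cr*η) * t^2 ≤ (1 + 2*cr*η) * δ^2 + 2*(η*‖w‖)*t + 2*(η*‖w‖)*δ :=
    aux1 t δ (η*‖w‖) d cr η ht0 hδ0 hc0 hcr hη hd0 hdt hcomb
  -- sqrt abbreviations
  set s : ℝ := Real.sqrt (1 - 2*cr*η) with hs
  set A : ℝ := Real.sqrt (1 + 2*cr*η) with hA'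
  set B : ℝ := Real.sqrt (2*‖w‖*η*δ) with hB'
  have hs0 : 0 < s := Real.sqrt_pos.mpr hβ
  have hss : s * s = 1 - 2*cr*η := Real.mul_self_sqrt hβ.le
  have hA0 : 0 ≤ A := Real.sqrt_nonneg _
  have hAA : A * A = 1 + 2*cr*η := Real.mul_self_sqrt (by nlinarith)
  have hB0 : 0 ≤ B := Real.sqrt_nonneg _
  have hBB : B * B = 2*‖w‖*η*δ := Real.mul_self_sqrt (by positivity)
  set P : ℝ := A * δ + B with hP
  have hP0 : 0 ≤ P := by positivity
  have h2 : (s*s) * t^2 ≤ P^2 + 2*(η*‖w‖)*t := by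
    have hAB : 0 ≤ (A*δ) * B := mul_nonneg (mul_nonneg hA0 hδ0) hB0
    have hPsq : P^2 = A*A*δ^2 + 2*((A*δ)*B) + B*B := by rw [hP]; ring
    rw [hss, hPsq, hAA, hBB]; linarith
  have key : (s*s) * t ≤ s * P + 2*(η*‖w‖) := aux2 s P (η*‖w‖) t hs0 hP0 hc0 ht0 h2
  have hrpow : (1 - 2 * cr * η) ^ (-(1:ℝ)/2) = s⁻¹ := by
    rw [show (-(1:ℝ)/2) = -(1/2) by norm_num, Real.rpow_neg hβ.le, ← Real.sqrt_eq_rpow, ← hs]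
  rw [hrpow]
  calc t ≤ (s * P + 2*(η*‖w‖)) / (s*s) := by
        rw [le_div_iff₀ (by positivity)]; linarith [key]
    _ = s⁻¹ * (A * δ + 2 * η * ‖w‖ / s + B) := by
        rw [hP]; field_simp; ring
end

section
/- Discrepancy principle rate: assume the source and nonlinearity conditions hold, ‖g^δ−g†‖ ≤ δ, and η* > 0 is chosen so that the minimizer u := u_{η*}^δ of ½‖K(v)−g^δ‖² + (η*/2)‖v‖² over C satisfies ‖K(u) − g^δ‖ = c_m δ with c_m ≥ 1. Then ‖u − u†‖ ≤ ε^{−1/2}( √(2(1+c_m)‖w‖) δ^{1/2} + (1+c_m)√c_r δ ). -/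
open scoped RealInnerProductSpace

/-- Convergence rate for the discrepancy principle (Theorem 3.2). -/
theorem discrepancy_principle_rate
    {X H : Type*} [NormedAddCommGroup X] [InnerProductSpace ℝ X] [CompleteSpace X]
    [NormedAddCommGroup H] [InnerProductSpace ℝ H] [CompleteSpace H]
    (K : X → H) (DK : X → X →L[ℝ] H) (hK : ∀ x, HasFDerivAt K (DK x) x)
    (E : X → X → H) (hE : ∀ u v, E u v = K u - K v - DK v (u - v))
    (C : Set X) (hCcl : IsClosed C) (hCconv : Convex ℝ C)
    (udag : X) (hudag : udag ∈ C) (w : H) (μdag : X)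
    (hsrc : (DK udag).adjoint w = udag - μdag)
    (hμ : ∀ v ∈ C, 0 ≤ ⟪μdag, v - udag⟫)
    (ε cr : ℝ) (hε : 0 < ε) (hcr : 0 ≤ cr)
    (hnon : ∀ v ∈ C,
      (ε/2) * ‖v - udag‖^2 ≤
        (cr/2) * ‖K v - K udag‖^2 + (1/2) * ‖v - udag‖^2
          - ⟪w, E v udag⟫ + ⟪μdag, v - udag⟫)
    (gdag gδ : H) (hg : gdag = K udag)
    (δ : ℝ) (hδ : ‖gδ - gdag‖ ≤ δ)
    (ηs : ℝ) (hηs : 0 < ηs)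
    (u : X) (hu : u ∈ C)
    (hmin : ∀ v ∈ C, (1/2) * ‖K u - gδ‖^2 + (ηs/2) * ‖u‖^2 ≤
      (1/2) * ‖K v - gδ‖^2 + (ηs/2) * ‖v‖^2)
    (cm : ℝ) (hcm : 1 ≤ cm)
    (hdisc : ‖K u - gδ‖ = cm * δ) :
    ‖u - udag‖ ≤ ε⁻¹ ^ ((1:ℝ)/2) *
      (Real.sqrt (2 * (1 + cm) * ‖w‖) * δ ^ ((1:ℝ)/2)
        + (1 + cm) * Real.sqrt cr * δ) := by
  have hδ0 : 0 ≤ δ := le_trans (norm_nonneg _) hδ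
  have hcm0 : (0:ℝ) ≤ 1 + cm := by linarith
  -- Step 1: ‖u‖² ≤ ‖udag‖²
  have hKud : ‖K udag - gδ‖ ≤ δ := by
    rw [norm_sub_rev, ← hg]; exact hδ
  have hnormu : ‖u‖^2 ≤ ‖udag‖^2 := by
    have h1 := hmin udag hudag
    have h2 : δ ≤ cm * δ := by nlinarith
    have h3 : ‖K udag - gδ‖^2 ≤ ‖K u - gδ‖^2 := by
      rw [hdisc]
      nlinarith [norm_nonneg (K udag - gδ)]
    nlinarith
  -- inner product computation
  have hadj : ⟪w, (DK udag) (u - udag)⟫ = ⟪udag - μdag, u - udag⟫ := by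
    rw [← ContinuousLinearMap.adjoint_inner_left, hsrc]
  have hT : ‖K u - K udag‖ ≤ (1 + cm) * δ := by
    calc ‖K u - K udag‖ ≤ ‖K u - gδ‖ + ‖gδ - K udag‖ := norm_sub_le_norm_sub_add_norm_sub _ _ _
    _ ≤ cm * δ + δ := by
        rw [hdisc]
        have : ‖gδ - K udag‖ ≤ δ := by rw [norm_sub_rev]; exact hKud
        linarith
    _ = (1 + cm) * δ := by ring
  have hTnn : 0 ≤ ‖K u - K udag‖ := norm_nonneg _
  have hwK : -⟪w, K u - K udag⟫ ≤ ‖w‖ * ‖K u - K udag‖ := by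
    have := abs_real_inner_le_norm w (K u - K udag)
    cases abs_cases ⟪w, K u - K udag⟫ with
    | inl h => linarith [h.1, this, real_inner_le_norm w (K u - K udag)]
    | inr h => linarith [h.1]
  have hkey : ε * ‖u - udag‖^2 ≤ cr * ‖K u - K udag‖^2 + 2 * ‖w‖ * ‖K u - K udag‖ := by
    have h1 := hnon u hu
    have hEexp : ⟪w, E u udag⟫ = ⟪w, K u - K udag⟫ - ⟪udag - μdag, u - udag⟫ := by
      rw [hE, sub_eq_add_neg (K u - K udag), inner_add_right, inner_neg_right, hadj]
      ring
    have hsq : ‖u - udag‖^2 = ‖u‖^2 - 2 * ⟪u, udag⟫ + ‖udag‖^2 :=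
      norm_sub_sq_real u udag
    have hin1 : ⟪udag - μdag, u - udag⟫ = ⟪udag, u - udag⟫ - ⟪μdag, u - udag⟫ := by
      rw [inner_sub_left]
    have hin2 : ⟪udag, u - udag⟫ = ⟪u, udag⟫ - ‖udag‖^2 := by
      rw [inner_sub_right, real_inner_comm, real_inner_self_eq_norm_sq]
    rw [hEexp, hin1, hin2] at h1
    nlinarith
  have hbound : ε * ‖u - udag‖^2 ≤ cr * ((1+cm)*δ)^2 + 2 * ‖w‖ * ((1+cm)*δ) := by
    have := mul_le_mul_of_nonneg_left hT (by positivity : (0:ℝ) ≤ 2 * ‖w‖)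
    nlinarith [sq_nonneg (‖K u - K udag‖ - (1+cm)*δ), mul_le_mul_of_nonneg_left hT hcr]
  -- conclude
  set R : ℝ := Real.sqrt (2 * (1 + cm) * ‖w‖) * Real.sqrt δ + (1 + cm) * Real.sqrt cr * δ with hR
  have hR0 : 0 ≤ R := by positivity
  have hRsq : cr * ((1+cm)*δ)^2 + 2 * ‖w‖ * ((1+cm)*δ) ≤ R^2 := by
    have h1 : (Real.sqrt (2 * (1 + cm) * ‖w‖) * Real.sqrt δ)^2 = 2 * (1+cm) * ‖w‖ * δ := by
      rw [mul_pow, Real.sq_sqrt (by positivity), Real.sq_sqrt hδ0]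
    have h2 : ((1 + cm) * Real.sqrt cr * δ)^2 = (1+cm)^2 * cr * δ^2 := by
      rw [mul_pow, mul_pow, Real.sq_sqrt hcr]
    have hc : 0 ≤ Real.sqrt (2 * (1 + cm) * ‖w‖) * Real.sqrt δ * ((1 + cm) * Real.sqrt cr * δ) := by
      positivity
    have hexp : R^2 = (Real.sqrt (2 * (1 + cm) * ‖w‖) * Real.sqrt δ)^2
        + 2 * (Real.sqrt (2 * (1 + cm) * ‖w‖) * Real.sqrt δ * ((1 + cm) * Real.sqrt cr * δ))
        + ((1 + cm) * Real.sqrt cr * δ)^2 := by rw [hR]; ring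
    have hLHS : cr * ((1+cm)*δ)^2 + 2*‖w‖*((1+cm)*δ)
        = (1+cm)^2*cr*δ^2 + 2*(1+cm)*‖w‖*δ := by ring
    rw [hLHS, hexp, h1, h2]
    linarith
  have hN : Real.sqrt ε * ‖u - udag‖ ≤ R := by
    have h1 : (Real.sqrt ε * ‖u - udag‖)^2 ≤ R^2 := by
      rw [mul_pow, Real.sq_sqrt hε.le]
      linarith
    have h2 : 0 ≤ Real.sqrt ε * ‖u - udag‖ := by positivity
    exact (pow_le_pow_iff_left₀ h2 hR0 (by norm_num)).mp h1
  have hgoal : ‖u - udag‖ ≤ (Real.sqrt ε)⁻¹ * R := by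
    rw [le_inv_mul_iff₀ (Real.sqrt_pos.mpr hε)]
    exact hN
  have he : ε⁻¹ ^ ((1:ℝ)/2) = (Real.sqrt ε)⁻¹ := by
    rw [← Real.sqrt_eq_rpow, Real.sqrt_inv]
  have hd : δ ^ ((1:ℝ)/2) = Real.sqrt δ := (Real.sqrt_eq_rpow δ).symm
  rw [he, hd]
  exact hgoal
end

section
/- Key step in the discrepancy principle proof: if u ∈ C satisfies ‖u‖ ≤ ‖u†‖ and ‖K(u) − K(u†)‖ ≤ (1+c_m)δ, and the source and nonlinearity conditions hold, then (ε/2)‖u − u†‖² ≤ (1+c_m)‖w‖δ + (c_r/2)(1+c_m)²δ². -/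
open scoped RealInnerProductSpace

/-- Key estimate in the proof of the discrepancy principle rate. -/
theorem discrepancy_key_step
    {X H : Type*} [NormedAddCommGroup X] [InnerProductSpace ℝ X] [CompleteSpace X]
    [NormedAddCommGroup H] [InnerProductSpace ℝ H] [CompleteSpace H]
    (K : X → H) (DK : X → X →L[ℝ] H) (hK : ∀ x, HasFDerivAt K (DK x) x)
    (E : X → X → H) (hE : ∀ u v, E u v = K u - K v - DK v (u - v))
    (C : Set X) (hCconv : Convex ℝ C)
    (udag : X) (hudag : udag ∈ C) (w : H) (μdag : X)
    (hsrc : (DK udag).adjoint w = udag - μdag)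
    (hμ : ∀ v ∈ C, 0 ≤ ⟪μdag, v - udag⟫)
    (ε cr : ℝ) (hε : 0 < ε) (hcr : 0 ≤ cr)
    (hnon : ∀ v ∈ C,
      (ε/2) * ‖v - udag‖^2 ≤
        (cr/2) * ‖K v - K udag‖^2 + (1/2) * ‖v - udag‖^2
          - ⟪w, E v udag⟫ + ⟪μdag, v - udag⟫)
    (δ cm : ℝ) (hδ0 : 0 ≤ δ) (hcm : 1 ≤ cm)
    (u : X) (hu : u ∈ C)
    (hnorm : ‖u‖ ≤ ‖udag‖)
    (hres : ‖K u - K udag‖ ≤ (1 + cm) * δ) :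
    (ε/2) * ‖u - udag‖^2 ≤ (1 + cm) * ‖w‖ * δ + (cr/2) * (1 + cm)^2 * δ^2 := by
  have h1 : (1/2) * ‖u - udag‖^2 ≤ -⟪udag, u - udag⟫ := by
    have e1 : ‖u - udag‖^2 = ‖u‖^2 - 2 * ⟪udag, u⟫ + ‖udag‖^2 := by
      rw [← real_inner_self_eq_norm_sq, ← real_inner_self_eq_norm_sq,
        ← real_inner_self_eq_norm_sq]
      rw [inner_sub_sub_self]
      rw [real_inner_comm u udag]; ring
    have e2 : ⟪udag, u - udag⟫ = ⟪udag, u⟫ - ‖udag‖^2 := by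
      rw [inner_sub_right, real_inner_self_eq_norm_sq]
    nlinarith [sq_nonneg (‖u‖ - ‖udag‖), norm_nonneg u, norm_nonneg udag]
  have hadj : ⟪udag - μdag, u - udag⟫ = ⟪w, DK udag (u - udag)⟫ := by
    rw [← hsrc, ContinuousLinearMap.adjoint_inner_left]
  have hsplit : ⟪w, K u - K udag⟫ = ⟪w, E u udag⟫ + ⟪w, DK udag (u - udag)⟫ := by
    simp [hE, inner_sub_right]
  have hcs : -⟪w, K u - K udag⟫ ≤ (1 + cm) * ‖w‖ * δ := by
    have := abs_real_inner_le_norm w (K u - K udag)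
    have h2 : ‖w‖ * ‖K u - K udag‖ ≤ ‖w‖ * ((1 + cm) * δ) :=
      mul_le_mul_of_nonneg_left hres (norm_nonneg w)
    have := neg_le_abs ⟪w, K u - K udag⟫
    nlinarith
  have hres2 : (cr/2) * ‖K u - K udag‖^2 ≤ (cr/2) * ((1 + cm) * δ)^2 := by
    have : ‖K u - K udag‖^2 ≤ ((1 + cm) * δ)^2 := by
      have h0 : (0:ℝ) ≤ ‖K u - K udag‖ := norm_nonneg _
      nlinarith
    nlinarith
  have hn := hnon u hu
  have hsub : ⟪udag - μdag, u - udag⟫ = ⟪udag, u - udag⟫ - ⟪μdag, u - udag⟫ := by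
    rw [inner_sub_left]
  nlinarith [hn, h1, hadj, hsplit, hcs, hres2, hsub]
end

section
/- Balancing principle residual convergence: suppose for each δ > 0 the selected parameter η*(δ) ∈ (0, M] satisfies the balancing equation γη*‖u_{η*}^δ‖² = ‖K(u_{η*}^δ) − g^δ‖² and the optimality F^{γ+1}(η*)/η* ≤ F^{γ+1}(δ)/δ, where F(η) = J_η(u_η^δ) is the value function, γ > 0, and F(δ) ≤ δ²/2 + δ‖u†‖². Then ‖K(u_{η*}^δ) − g^δ‖ → 0 as δ → 0. -/
open Filter

/-- Residual convergence for the balancing principle (Lemma 3.4). -/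
theorem balancing_residual_tendsto_zero
    {X H : Type*} [NormedAddCommGroup X] [InnerProductSpace ℝ X]
    [NormedAddCommGroup H] [InnerProductSpace ℝ H]
    (K : X → H) (udag : X) (γ M : ℝ) (hγ : 0 < γ) (hM : 0 < M)
    (ηs : ℝ → ℝ) (us : ℝ → X) (gδ : ℝ → H) (F : ℝ → ℝ → ℝ)
    (hη : ∀ d : ℝ, 0 < d → 0 < ηs d ∧ ηs d ≤ M)
    (hval : ∀ d : ℝ, 0 < d →
      F d (ηs d) = (1/2) * ‖K (us d) - gδ d‖^2 + (ηs d / 2) * ‖us d‖^2)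
    (hbal : ∀ d : ℝ, 0 < d → γ * ηs d * ‖us d‖^2 = ‖K (us d) - gδ d‖^2)
    (hopt : ∀ d : ℝ, 0 < d →
      (F d (ηs d)) ^ (γ + 1) / ηs d ≤ (F d d) ^ (γ + 1) / d)
    (hF0 : ∀ d : ℝ, 0 < d → 0 ≤ F d d)
    (hFd : ∀ d : ℝ, 0 < d → F d d ≤ d^2/2 + d * ‖udag‖^2) :
    Tendsto (fun d => ‖K (us d) - gδ d‖) (nhdsWithin 0 (Set.Ioi 0)) (nhds 0) := by
  have hγ1 : (0:ℝ) < γ + 1 := by linarith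
  set c : ℝ := (γ + 1) / (2 * γ) with hc_def
  have hc : 0 < c := by positivity
  set A : ℝ → ℝ := fun d => d / 2 + ‖udag‖ ^ 2 with hA_def
  set B : ℝ → ℝ := fun d => ((M * d ^ γ * A d ^ (γ + 1)) ^ (1 / (γ + 1))) / c
    with hB_def
  have hbound : ∀ d : ℝ, 0 < d → ‖K (us d) - gδ d‖ ≤ Real.sqrt (B d) := by
    intro d hd
    obtain ⟨hη0, hηM⟩ := hη d hd
    set r : ℝ := ‖K (us d) - gδ d‖ ^ 2 with hr_def
    have hr0 : 0 ≤ r := sq_nonneg _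
    have hF : F d (ηs d) = c * r := by
      have hb := hbal d hd
      rw [hval d hd, hr_def, ← hb, hc_def]
      field_simp
    have hA0 : 0 ≤ A d := by
      have : 0 ≤ ‖udag‖ ^ 2 := sq_nonneg _
      simp only [hA_def]; linarith
    have hFd0 : 0 ≤ F d d := hF0 d hd
    have key : (c * r) ^ (γ + 1) ≤ M * d ^ γ * A d ^ (γ + 1) := by
      have h1 : (c * r) ^ (γ + 1) / ηs d ≤ (F d d) ^ (γ + 1) / d := by
        rw [← hF]; exact hopt d hd
      have h2 : (c * r) ^ (γ + 1) ≤ (F d d) ^ (γ + 1) / d * ηs d :=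
        (div_le_iff₀ hη0).mp h1
      have h3 : (F d d) ^ (γ + 1) / d * ηs d ≤ (F d d) ^ (γ + 1) / d * M := by
        apply mul_le_mul_of_nonneg_left hηM
        positivity
      have h4 : (F d d) ^ (γ + 1) ≤ (d * A d) ^ (γ + 1) := by
        apply Real.rpow_le_rpow hFd0 _ hγ1.le
        have := hFd d hd
        simp only [hA_def]
        nlinarith
      have h5 : (d * A d) ^ (γ + 1) = d ^ γ * d * A d ^ (γ + 1) := by
        rw [Real.mul_rpow hd.le hA0, Real.rpow_add hd, Real.rpow_one]
      have h6 : (F d d) ^ (γ + 1) / d * M ≤ M * d ^ γ * A d ^ (γ + 1) := by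
        have : (d * A d) ^ (γ + 1) / d * M = M * d ^ γ * A d ^ (γ + 1) := by
          rw [h5]; field_simp
        rw [← this]
        apply mul_le_mul_of_nonneg_right _ hM.le
        exact div_le_div_of_nonneg_right h4 hd.le
      linarith
    have h7 : c * r ≤ (M * d ^ γ * A d ^ (γ + 1)) ^ (1 / (γ + 1)) := by
      have hcr : 0 ≤ c * r := by positivity
      have := Real.rpow_le_rpow (by positivity) key (by positivity : (0:ℝ) ≤ 1 / (γ + 1))
      rwa [← Real.rpow_mul hcr, mul_one_div, div_self hγ1.ne', Real.rpow_one] at this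
    have hrB : r ≤ B d := by
      rw [hB_def]
      rw [le_div_iff₀ hc]
      linarith [h7, mul_comm c r]
    have hBnn : 0 ≤ B d := by rw [hB_def]; positivity
    exact (Real.le_sqrt (norm_nonneg (K (us d) - gδ d)) hBnn).mpr hrB
  have hA0cont : ContinuousAt A 0 := by
    simp only [hA_def]
    fun_prop
  have hcont : ContinuousAt (fun d => Real.sqrt (B d)) 0 := by
    apply Real.continuous_sqrt.continuousAt.comp
    apply ContinuousAt.div_const
    apply ContinuousAt.comp (g := fun x : ℝ => x ^ (1 / (γ + 1)))
    · apply Real.continuousAt_rpow_const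
      right; positivity
    · apply ContinuousAt.mul
      · apply ContinuousAt.mul continuousAt_const
        exact Real.continuousAt_rpow_const 0 γ (Or.inr hγ.le)
      · exact (Real.continuousAt_rpow_const _ _ (Or.inr hγ1.le)).comp hA0cont
  have hB0 : Real.sqrt (B 0) = 0 := by
    simp only [hB_def, Real.zero_rpow hγ.ne', mul_zero, zero_mul,
      Real.zero_rpow (by positivity : (1:ℝ)/(γ+1) ≠ 0), zero_div, Real.sqrt_zero]
  have htend : Tendsto (fun d => Real.sqrt (B d)) (nhdsWithin 0 (Set.Ioi 0)) (nhds 0) := by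
    have h := hcont.tendsto.mono_left
      (nhdsWithin_le_nhds : nhdsWithin (0:ℝ) (Set.Ioi 0) ≤ nhds 0)
    rwa [hB0] at h
  apply squeeze_zero' _ _ htend
  · filter_upwards with d using norm_nonneg _
  · filter_upwards [self_mem_nhdsWithin] with d hd
    exact hbound d hd
end

section
/- Hanke–Raus parameter lower bound: let η* minimize η ↦ ‖K(u_η^δ)−g^δ‖²/η over (0, M], set δ* = ‖K(u_{η*}^δ)−g^δ‖ > 0, and suppose at η̃ = δ one has ‖K(u_δ^δ)−g^δ‖ ≤ (2/c_s)δ + (2/(1−2c_rδ))‖w‖δ + δ. Then 1/η* ≤ ((2+c_s)/c_s + 2‖w‖/(1−2c_rδ))² · δ/δ*², and consequently the propagation bound ‖u_{η*}^δ − u_{η*}‖ ≤ (1/√(ε'c_s))·δ/√η* ≤ (1/√(c_sε'))·(δ/δ*)·((2+c_s)/c_s + 2‖w‖/(1−2c_rδ))·δ^{1/2} holds. -/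
/-- Hanke–Raus rule (Theorem 3.6, key steps): lower bound on the selected
parameter `η*` and the resulting propagation-error bound. -/
theorem hanke_raus_bounds
    {X H : Type*} [NormedAddCommGroup X] [InnerProductSpace ℝ X]
    [NormedAddCommGroup H] [InnerProductSpace ℝ H]
    (K : X → H) (gδ : H) (udag : X) (w : H)
    (uδ uE : ℝ → X)  -- noisy and exact-data minimizers as functions of η
    (δ M cs ε' cr ηs δs : ℝ)
    (hδ : 0 < δ) (hM : 0 < M) (hcs : 0 < cs) (hcs1 : cs ≤ 1) (hε' : 0 < ε')
    (hcr : 0 ≤ cr) (hcrδ : 2 * cr * δ < 1)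
    (hηs : ηs ∈ Set.Ioc (0:ℝ) M) (hδM : δ ∈ Set.Ioc (0:ℝ) M)
    (hδs : δs = ‖K (uδ ηs) - gδ‖) (hδs0 : 0 < δs)
    -- propagation bound from Lemma 2.3 (second-order sufficient condition):
    (hprop : ∀ η : ℝ, 0 < η → ‖uδ η - uE η‖ ≤ δ / Real.sqrt (ε' * cs * η))
    -- optimality of η* for the Hanke–Raus functional on (0, M]:
    (hopt : ∀ η ∈ Set.Ioc (0:ℝ) M,
      ‖K (uδ ηs) - gδ‖^2 / ηs ≤ ‖K (uδ η) - gδ‖^2 / η)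
    -- residual bound at η̃ = δ (triangle inequality with Lemma 2.3):
    (hresδ : ‖K (uδ δ) - gδ‖ ≤ (2 / cs) * δ + (2 / (1 - 2 * cr * δ)) * ‖w‖ * δ + δ) :
    1 / ηs ≤ ((2 + cs) / cs + 2 * ‖w‖ / (1 - 2 * cr * δ))^2 * δ / δs^2 ∧
      ‖uδ ηs - uE ηs‖ ≤ (1 / Real.sqrt (ε' * cs)) * (δ / Real.sqrt ηs) ∧
      ‖uδ ηs - uE ηs‖ ≤ (1 / Real.sqrt (cs * ε')) * (δ / δs) *
        ((2 + cs) / cs + 2 * ‖w‖ / (1 - 2 * cr * δ)) * δ ^ ((1:ℝ)/2) := by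
  obtain ⟨hηs0, hηsM⟩ := hηs
  have hden : 0 < 1 - 2 * cr * δ := by linarith
  set C : ℝ := (2 + cs) / cs + 2 * ‖w‖ / (1 - 2 * cr * δ) with hC
  have hC0 : 0 < C := by
    rw [hC]
    exact add_pos_of_pos_of_nonneg (by positivity) (div_nonneg (by positivity) hden.le)
  -- residual bound: ‖K(uδ δ) - gδ‖ ≤ C * δ
  have hres : ‖K (uδ δ) - gδ‖ ≤ C * δ := by
    refine hresδ.trans (le_of_eq ?_)
    rw [hC]; field_simp; ring
  -- first claim
  have key : δs ^ 2 / ηs ≤ C ^ 2 * δ := by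
    have h1 := hopt δ hδM
    rw [← hδs] at h1
    have h2 : ‖K (uδ δ) - gδ‖ ^ 2 ≤ (C * δ) ^ 2 := by
      have := norm_nonneg (K (uδ δ) - gδ)
      nlinarith
    have h3 : ‖K (uδ δ) - gδ‖ ^ 2 / δ ≤ (C * δ) ^ 2 / δ := by gcongr
    have h4 : (C * δ) ^ 2 / δ = C ^ 2 * δ := by field_simp
    linarith
  have first : 1 / ηs ≤ C ^ 2 * δ / δs ^ 2 := by
    have e : 1 / ηs = δs ^ 2 / ηs / δs ^ 2 := by
      field_simp
    rw [e]
    gcongr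
  have ha : Real.sqrt (ε' * cs) ≠ 0 := by positivity
  have hb : Real.sqrt ηs ≠ 0 := by positivity
  have e2 : δ / Real.sqrt (ε' * cs * ηs)
      = 1 / Real.sqrt (ε' * cs) * (δ / Real.sqrt ηs) := by
    rw [Real.sqrt_mul (by positivity : (0:ℝ) ≤ ε' * cs)]
    field_simp
  have second : ‖uδ ηs - uE ηs‖ ≤ 1 / Real.sqrt (ε' * cs) * (δ / Real.sqrt ηs) := by
    have := hprop ηs hηs0
    rwa [e2] at this
  refine ⟨first, second, ?_⟩
  have hsq : Real.sqrt (1 / ηs) ≤ Real.sqrt (C ^ 2 * δ / δs ^ 2) :=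
    Real.sqrt_le_sqrt first
  have hs1 : Real.sqrt (1 / ηs) = 1 / Real.sqrt ηs := by
    rw [one_div, Real.sqrt_inv, one_div]
  have hs2 : Real.sqrt (C ^ 2 * δ / δs ^ 2) = C * Real.sqrt δ / δs := by
    rw [Real.sqrt_div' _ (by positivity), Real.sqrt_mul (by positivity),
      Real.sqrt_sq hC0.le, Real.sqrt_sq hδs0.le]
  have hsqrtle : 1 / Real.sqrt ηs ≤ C * Real.sqrt δ / δs := by
    rw [← hs1, ← hs2]; exact hsq
  have hεcs : Real.sqrt (cs * ε') = Real.sqrt (ε' * cs) := by rw [mul_comm]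
  have hrpow : δ ^ ((1:ℝ)/2) = Real.sqrt δ := (Real.sqrt_eq_rpow δ).symm
  calc ‖uδ ηs - uE ηs‖ ≤ 1 / Real.sqrt (ε' * cs) * (δ / Real.sqrt ηs) := second
    _ = 1 / Real.sqrt (ε' * cs) * δ * (1 / Real.sqrt ηs) := by ring
    _ ≤ 1 / Real.sqrt (ε' * cs) * δ * (C * Real.sqrt δ / δs) := by
        exact mul_le_mul_of_nonneg_left hsqrtle (by positivity)
    _ = 1 / Real.sqrt (cs * ε') * (δ / δs) * C * δ ^ ((1:ℝ)/2) := by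
        rw [hεcs, hrpow]; field_simp
end
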